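/- Monotonicity of the residue: with R^k_t as in the state-decomposition lemma (ρ^k_t = |ψ^k_t⟩⟨ψ^k_t| + R^k_t), the residues satisfy the recursion R^k_{t+1} = U_{t+1}(4p(1-p)|k,α^k_{t,k}⟩⟨k,α^k_{t,k}| + O^k_p(R^k_t))U_{t+1}†, and hence Tr(R^k_{t+1}) = Tr(R^k_t) + 4p(1-p)‖α^k_{t,k}‖². Consequently Tr(R^k_T) = 4p(1-p)Σ_{t=0}^{T-1}‖α^k_{t,k}‖², and ‖ψ^k_T‖² = 1 - 4p(1-p)Σ_{t=0}^{T-1}‖α^k_{t,k}‖². -/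

import Mathlib

open Matrix ComplexOrder Finset

/-- Outer product `|v⟩⟨v|`. -/
noncomputable def outer {n : Type*} [Fintype n] (v : n → ℂ) : Matrix n n ℂ :=
  Matrix.vecMulVec v (star v)

/-- The perfect Grover oracle `Ô^k = (I - 2|k⟩⟨k|) ⊗ I`. -/
noncomputable def oracleHat {N M : ℕ} (k : Fin N) :
    Matrix (Fin N × Fin M) (Fin N × Fin M) ℂ :=
  Matrix.diagonal fun x => if x.1 = k then -1 else 1

/-- The `p`-faulty oracle channel `O^k_p(ρ) = (1-p)·Ô^k ρ Ô^{k†} + p·ρ`. -/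
noncomputable def faultyOracle {N M : ℕ} (p : ℝ) (k : Fin N)
    (ρ : Matrix (Fin N × Fin M) (Fin N × Fin M) ℂ) :
    Matrix (Fin N × Fin M) (Fin N × Fin M) ℂ :=
  ((1 - p : ℝ) : ℂ) • (oracleHat k * ρ * (oracleHat k)ᴴ) + (p : ℂ) • ρ

/-- Projection of a vector onto the subspace `|k⟩ ⊗ ℂ^M`, i.e. `|k, β_k⟩`. -/
def projVec {N M : ℕ} (k : Fin N) (v : Fin N × Fin M → ℂ) : Fin N × Fin M → ℂ :=
  fun x => if x.1 = k then v x else 0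

/-- The positive semidefinite square root of a positive semidefinite matrix
(the Mathlib definition of December 2024, since removed from Mathlib). -/
noncomputable def Matrix.PosSemidef.sqrt {n : Type*} [Fintype n] [DecidableEq n]
    {A : Matrix n n ℂ} (hA : A.PosSemidef) : Matrix n n ℂ :=
  hA.1.eigenvectorUnitary.1 * diagonal ((↑) ∘ (√·) ∘ hA.1.eigenvalues) *
    (star hA.1.eigenvectorUnitary : Matrix n n ℂ)

/-- The trace norm (sum of singular values) of a complex matrix. -/
noncomputable def traceNorm {n : Type*} [Fintype n] [DecidableEq n]
    (A : Matrix n n ℂ) : ℝ :=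
  ((Matrix.posSemidef_conjTranspose_mul_self A).sqrt.trace).re

/-!
The channel `O^k_p` sends `|ψ⟩⟨ψ|` to the mixture `(1-p)|Ô^k ψ⟩⟨Ô^k ψ| + p|ψ⟩⟨ψ|`, and since
`Ô^k ψ = ψ - 2|k, ψ_k⟩`, this mixture is the pure state at the mean `ψ - 2(1-p)|k, ψ_k⟩` plus the
variance term `4p(1-p)|k, ψ_k⟩⟨k, ψ_k|`. By linearity of `O^k_p` the residue therefore picks up
exactly this term at each step, and as `O^k_p` and the unitary conjugations preserve the trace,
`Tr R^k_t` grows by `4p(1-p)‖α^k_{t,k}‖²`. Finally `Tr ρ^k_T = 1` splits as `‖ψ^k_T‖² + Tr R^k_T`.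
-/

section Outer

variable {n : Type*} [Fintype n]

lemma trace_outer (v : n → ℂ) : (outer v).trace = ((∑ x, ‖v x‖ ^ 2 : ℝ) : ℂ) := by
  push_cast
  simp [outer, dotProduct, Complex.mul_conj, Complex.normSq_eq_norm_sq]

lemma outer_mulVec (A : Matrix n n ℂ) (v : n → ℂ) : outer (A *ᵥ v) = A * outer v * Aᴴ := by
  rw [outer, outer, mul_vecMulVec, vecMulVec_mul, star_mulVec]

lemma trace_unitary_conj [DecidableEq n] {U : Matrix n n ℂ} (hU : U ∈ unitaryGroup n ℂ)
    (A : Matrix n n ℂ) :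
    (U * A * Uᴴ).trace = A.trace := by
  rw [trace_mul_cycle, ← star_eq_conjTranspose, hU.1, one_mul]

end Outer

section Oracle

variable {N M : ℕ} (k : Fin N)

lemma oracleHat_conjTranspose : (oracleHat (M := M) k)ᴴ = oracleHat k := by
  simp only [oracleHat, diagonal_conjTranspose]
  congr 1
  ext x
  split_ifs <;> simp [*]

lemma oracleHat_mul_self : oracleHat (M := M) k * oracleHat k = 1 := by
  simp only [oracleHat, diagonal_mul_diagonal]
  rw [← diagonal_one]
  congr 1
  ext x
  split_ifs <;> norm_num

lemma oracleHat_conj_apply (A : Matrix (Fin N × Fin M) (Fin N × Fin M) ℂ) (i j : Fin N × Fin M) :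
    (oracleHat k * A * (oracleHat k)ᴴ : Matrix (Fin N × Fin M) (Fin N × Fin M) ℂ) i j =
      (if i.1 = k then -1 else 1) * A i j * (if j.1 = k then -1 else 1) := by
  rw [oracleHat_conjTranspose, oracleHat, mul_diagonal, diagonal_mul]

lemma faultyOracle_add (p : ℝ) (A B : Matrix (Fin N × Fin M) (Fin N × Fin M) ℂ) :
    faultyOracle p k (A + B) = faultyOracle p k A + faultyOracle p k B := by
  simp only [faultyOracle, mul_add, add_mul, smul_add]
  abel

lemma trace_faultyOracle (p : ℝ) (A : Matrix (Fin N × Fin M) (Fin N × Fin M) ℂ) :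
    (faultyOracle p k A).trace = A.trace := by
  have hconj : (oracleHat k * A * (oracleHat k)ᴴ).trace = A.trace := by
    rw [trace_mul_cycle, oracleHat_conjTranspose, oracleHat_mul_self, one_mul]
  simp only [faultyOracle, trace_add, trace_smul, hconj, smul_eq_mul]
  push_cast
  ring

lemma faultyOracle_outer (p : ℝ) (ψ : Fin N × Fin M → ℂ) :
    faultyOracle p k (outer ψ) =
      outer (ψ - ((2 * (1 - p) : ℝ) : ℂ) • projVec k ψ)
        + ((4 * p * (1 - p) : ℝ) : ℂ) • outer (projVec k ψ) := by
  ext i j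
  simp only [faultyOracle, Matrix.add_apply, Matrix.smul_apply, smul_eq_mul, oracleHat_conj_apply]
  by_cases hi : i.1 = k <;> by_cases hj : j.1 = k <;>
    simp [outer, vecMulVec_apply, projVec, hi, hj, Complex.conj_ofReal] <;> ring

lemma sum_norm_sq_projVec (v : Fin N × Fin M → ℂ) :
    ∑ x, ‖projVec k v x‖ ^ 2 = ∑ b, ‖v (k, b)‖ ^ 2 := by
  rw [Fintype.sum_prod_type, Finset.sum_eq_single k (fun a _ ha => by simp [projVec, ha])
    (by simp)]
  simp [projVec]

end Oracle

lemma residue_eq_of_step {N M : ℕ} (p : ℝ) (k : Fin N)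
    {U R R' : Matrix (Fin N × Fin M) (Fin N × Fin M) ℂ} {ψ : Fin N × Fin M → ℂ}
    (h : outer (U *ᵥ (ψ - ((2 * (1 - p) : ℝ) : ℂ) • projVec k ψ)) + R' =
      U * faultyOracle p k (outer ψ + R) * Uᴴ) :
    R' = U * (((4 * p * (1 - p) : ℝ) : ℂ) • outer (projVec k ψ) + faultyOracle p k R) * Uᴴ := by
  rw [faultyOracle_add, faultyOracle_outer, add_assoc, mul_add, add_mul, ← outer_mulVec] at h
  exact add_left_cancel h

theorem residue_recursion_general {N M T : ℕ} (p : ℝ) (k : Fin N)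
    (U : ℕ → Matrix (Fin N × Fin M) (Fin N × Fin M) ℂ)
    (hU : ∀ t, U t ∈ Matrix.unitaryGroup (Fin N × Fin M) ℂ)
    (ψ₀ : Fin N × Fin M → ℂ) (hψ₀ : ∑ x, ‖ψ₀ x‖ ^ 2 = 1)
    (ρ ρhat : ℕ → Matrix (Fin N × Fin M) (Fin N × Fin M) ℂ)
    (ψ ψhat : ℕ → Fin N × Fin M → ℂ)
    (R : ℕ → Matrix (Fin N × Fin M) (Fin N × Fin M) ℂ)
    (hρhat0 : ρhat 0 = outer ψ₀)
    (hρ : ∀ t, ρ t = U t * ρhat t * (U t)ᴴ)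
    (hρhatS : ∀ t, ρhat (t + 1) = faultyOracle p k (ρ t))
    (hψ : ∀ t, ψ t = (U t).mulVec (ψhat t))
    (hψhatS : ∀ t, ψhat (t + 1) = ψ t - ((2 * (1 - p) : ℝ) : ℂ) • projVec k (ψ t))
    (hR : ∀ t, ρ t = outer (ψ t) + R t)
    (hR0 : R 0 = 0) :
    (∀ t, R (t + 1) =
        U (t + 1) * (((4 * p * (1 - p) : ℝ) : ℂ) • outer (projVec k (ψ t))
          + faultyOracle p k (R t)) * (U (t + 1))ᴴ) ∧
    (∀ t, (R (t + 1)).trace =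
        (R t).trace + ((4 * p * (1 - p) * ∑ b, ‖ψ t (k, b)‖ ^ 2 : ℝ) : ℂ)) ∧
    ((R T).trace =
        ((4 * p * (1 - p) * ∑ t ∈ Finset.range T, ∑ b, ‖ψ t (k, b)‖ ^ 2 : ℝ) : ℂ)) ∧
    (∑ x, ‖ψ T x‖ ^ 2 =
        1 - 4 * p * (1 - p) * ∑ t ∈ Finset.range T, ∑ b, ‖ψ t (k, b)‖ ^ 2) := by
  have hstep : ∀ t, R (t + 1) = U (t + 1) * (((4 * p * (1 - p) : ℝ) : ℂ) •
      outer (projVec k (ψ t)) + faultyOracle p k (R t)) * (U (t + 1))ᴴ := fun t =>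
    residue_eq_of_step p k <| by
      rw [← hψhatS, ← hψ, ← hR, ← hR, ← hρhatS, ← hρ]
  have htrace_step : ∀ t, (R (t + 1)).trace =
      (R t).trace + ((4 * p * (1 - p) * ∑ b, ‖ψ t (k, b)‖ ^ 2 : ℝ) : ℂ) := fun t => by
    rw [hstep, trace_unitary_conj (hU _), trace_add, trace_smul, trace_faultyOracle, trace_outer,
      sum_norm_sq_projVec, smul_eq_mul, add_comm, ← Complex.ofReal_mul]
  have htrace : (R T).trace =
      ((4 * p * (1 - p) * ∑ t ∈ Finset.range T, ∑ b, ‖ψ t (k, b)‖ ^ 2 : ℝ) : ℂ) := by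
    rw [Finset.mul_sum, Complex.ofReal_sum]
    exact (Finset.sum_range_induction _ (fun t => (R t).trace) (by simp [hR0]) T
      fun t _ => htrace_step t).symm
  have htrace_ρ : ∀ t, (ρ t).trace = 1 := fun t => by
    induction t with
    | zero => rw [hρ, trace_unitary_conj (hU 0), hρhat0, trace_outer, hψ₀, Complex.ofReal_one]
    | succ t ih => rw [hρ, trace_unitary_conj (hU _), hρhatS, trace_faultyOracle, ih]
  refine ⟨hstep, htrace_step, htrace, ?_⟩
  have hsplit := htrace_ρ T
  rw [hR, trace_add, trace_outer, htrace, ← Complex.ofReal_add, ← Complex.ofReal_one,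
    Complex.ofReal_inj] at hsplit
  linarith

/-- Monotonicity of the residue: the residues satisfy the stated recursion, their
traces accumulate `4p(1-p)‖α^k_{t,k}‖²` per step, and hence
`‖ψ^k_T‖² = 1 - 4p(1-p)Σ_t‖α^k_{t,k}‖²`. -/
theorem residue_recursion {N M T : ℕ} (p : ℝ) (hp0 : 0 < p) (hp1 : p < 1) (k : Fin N)
    (U : ℕ → Matrix (Fin N × Fin M) (Fin N × Fin M) ℂ)
    (hU : ∀ t, U t ∈ Matrix.unitaryGroup (Fin N × Fin M) ℂ)
    (ψ₀ : Fin N × Fin M → ℂ) (hψ₀ : ∑ x, ‖ψ₀ x‖ ^ 2 = 1)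
    (ρ ρhat : ℕ → Matrix (Fin N × Fin M) (Fin N × Fin M) ℂ)
    (ψ ψhat : ℕ → Fin N × Fin M → ℂ)
    (R : ℕ → Matrix (Fin N × Fin M) (Fin N × Fin M) ℂ)
    (hρhat0 : ρhat 0 = outer ψ₀)
    (hρ : ∀ t, ρ t = U t * ρhat t * (U t)ᴴ)
    (hρhatS : ∀ t, ρhat (t + 1) = faultyOracle p k (ρ t))
    (hψhat0 : ψhat 0 = ψ₀)
    (hψ : ∀ t, ψ t = (U t).mulVec (ψhat t))
    (hψhatS : ∀ t, ψhat (t + 1) = ψ t - ((2 * (1 - p) : ℝ) : ℂ) • projVec k (ψ t))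
    (hR : ∀ t, ρ t = outer (ψ t) + R t)
    (hR0 : R 0 = 0) :
    (∀ t, R (t + 1) =
        U (t + 1) * (((4 * p * (1 - p) : ℝ) : ℂ) • outer (projVec k (ψ t))
          + faultyOracle p k (R t)) * (U (t + 1))ᴴ) ∧
    (∀ t, (R (t + 1)).trace =
        (R t).trace + ((4 * p * (1 - p) * ∑ b, ‖ψ t (k, b)‖ ^ 2 : ℝ) : ℂ)) ∧
    ((R T).trace =
        ((4 * p * (1 - p) * ∑ t ∈ Finset.range T, ∑ b, ‖ψ t (k, b)‖ ^ 2 : ℝ) : ℂ)) ∧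
    (∑ x, ‖ψ T x‖ ^ 2 =
        1 - 4 * p * (1 - p) * ∑ t ∈ Finset.range T, ∑ b, ‖ψ t (k, b)‖ ^ 2) :=
  residue_recursion_general p k U hU ψ₀ hψ₀ ρ ρhat ψ ψhat R hρhat0 hρ hρhatS hψ hψhatS hR hR0
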